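/- arXiv:2006.10812 — 6 statements merged into one kernel-verified Lean document; each statement's English description precedes it below -/
import Mathlib

section
/- Let k be a field of characteristic p > 0, let V be a finite-dimensional k-vector space of dimension n, and write n = a·p + b with natural numbers a, b satisfying 0 ≤ b < p. Let u be a unipotent linear automorphism of V with a single Jordan block (i.e. (u − 1)^(n−1) ≠ 0). Then the p-th power u^p has p Jordan blocks, b of size a + 1 and p − b of size a; equivalently, for every natural number j, dim_k ker((u^p − 1)^j) = b·min(j, a+1) + (p − b)·min(j, a) = min(p·j, n). -/
/-!
In characteristic `p` we have `u ^ p - 1 = (u - 1) ^ p`, so the kernels in question are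
`ker ((u - 1) ^ (p * j))`. A nilpotent `N` on an `n`-dimensional space with `N ^ (n - 1) ≠ 0`
has strictly increasing kernels `ker (N ^ j)` for `j ≤ n`, which forces
`dim ker (N ^ j) = min j n`; it remains to check `min (p * j) (a * p + b)` against the
block-count formula.
-/

open Module LinearMap

theorem Nat.eq_self_of_lt_succ_of_le {f : ℕ → ℕ} {n : ℕ} (hf : ∀ j < n, f j < f (j + 1))
    (hn : f n ≤ n) {j : ℕ} (hj : j ≤ n) : f j = j := by
  have gap : ∀ i l, i ≤ l → l ≤ n → f i + (l - i) ≤ f l := by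
    intro i l hil hln
    induction l, hil using Nat.le_induction with
    | base => simp
    | succ l hil ih => have := hf l (by omega); have := ih (by omega); omega
  have := gap 0 j (Nat.zero_le j) hj
  have := gap j n hj le_rfl
  omega

theorem Nat.min_mul_add_eq {p a b : ℕ} (hb : b < p) (j : ℕ) :
    min (p * j) (a * p + b) = b * min j (a + 1) + (p - b) * min j a := by
  obtain ⟨c, rfl⟩ : ∃ c, p = b + c := ⟨p - b, by omega⟩
  rw [Nat.add_sub_cancel_left]
  rcases le_or_gt j a with hja | haj
  · obtain ⟨d, rfl⟩ := Nat.exists_eq_add_of_le hja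
    rw [min_eq_left (by nlinarith), min_eq_left (by omega), min_eq_left le_self_add]
    ring
  · obtain ⟨d, rfl⟩ := Nat.exists_eq_add_of_lt haj
    rw [min_eq_right (by nlinarith), min_eq_right (by omega), min_eq_right (by omega)]
    ring

namespace Module.End

variable {K V : Type*} [Field K] [AddCommGroup V] [Module K V]

theorem pow_finrank_eq_zero_of_isNilpotent [FiniteDimensional K V] {N : End K V}
    (hN : IsNilpotent N) : N ^ finrank K V = 0 := by
  simpa [hN.charpoly_eq_X_pow_finrank] using N.aeval_self_charpoly

theorem ker_pow_lt_ker_pow_succ {N : End K V} (hN : IsNilpotent N) {m j : ℕ}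
    (hm : N ^ m ≠ 0) (hjm : j ≤ m) : ker (N ^ j) < ker (N ^ (j + 1)) := by
  refine lt_of_le_of_ne (by rw [pow_succ']; exact ker_le_ker_comp _ _) fun heq => hm ?_
  obtain ⟨r, hr⟩ := hN
  have hNj : N ^ j = 0 := by
    rw [← ker_eq_top, ker_pow_constant heq r, pow_add, hr, mul_zero, ker_zero]
  rw [← Nat.add_sub_cancel' hjm, pow_add, hNj, zero_mul]

theorem finrank_ker_pow_of_pow_pred_ne_zero [FiniteDimensional K V] {N : End K V}
    (hN : IsNilpotent N) (hreg : N ^ (finrank K V - 1) ≠ 0) (j : ℕ) :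
    finrank K (ker (N ^ j)) = min j (finrank K V) := by
  set n := finrank K V
  rcases le_or_gt j n with hjn | hnj
  · rw [min_eq_left hjn]
    exact Nat.eq_self_of_lt_succ_of_le (f := fun i => finrank K (ker (N ^ i)))
      (fun i hi => Submodule.finrank_lt_finrank_of_lt
        (ker_pow_lt_ker_pow_succ hN hreg (by omega))) (Submodule.finrank_le _) hjn
  · rw [min_eq_right hnj.le, ← Nat.add_sub_cancel' hnj.le, pow_add, pow_finrank_eq_zero_of_isNilpotent hN,
      zero_mul, ker_zero, finrank_top]

end Module.End

/-- Lemma `lem:power`.  Let `k` be a field of characteristic `p > 0`,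
`V` a finite-dimensional `k`-vector space of dimension `n = a * p + b` with `b < p`,
and `u` a unipotent endomorphism of `V` with a single Jordan block
(`(u - 1) ^ (n - 1) ≠ 0`).  Then `u ^ p` has `p` Jordan blocks, `b` of size `a + 1`
and `p - b` of size `a`; equivalently, for every `j`,
`dim ker ((u ^ p - 1) ^ j) = b * min j (a+1) + (p - b) * min j a = min (p * j) n`. -/
theorem stmt0 {k : Type*} [Field k] {p : ℕ} (hp : 0 < p) [CharP k p]
    {V : Type*} [AddCommGroup V] [Module k V] [FiniteDimensional k V]
    (n a b : ℕ) (hn : Module.finrank k V = n) (hnab : n = a * p + b) (hb : b < p)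
    (u : Module.End k V) (hu : IsNilpotent (u - 1))
    (hreg : (u - 1) ^ (n - 1) ≠ 0) :
    ∀ j : ℕ,
      Module.finrank k (LinearMap.ker ((u ^ p - 1) ^ j)) =
        b * min j (a + 1) + (p - b) * min j a ∧
      Module.finrank k (LinearMap.ker ((u ^ p - 1) ^ j)) = min (p * j) n := by
  intro j
  subst hn
  have : Nontrivial V := by
    by_contra h
    rw [not_nontrivial_iff_subsingleton] at h
    exact hreg (Subsingleton.elim _ _)
  have : Fact p.Prime := ⟨(CharP.char_is_prime_or_zero k p).resolve_right hp.ne'⟩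
  have : CharP (End k V) p := charP_of_injective_algebraMap' k p
  have hfrob : u ^ p - 1 = (u - 1) ^ p := by
    rw [sub_pow_char_of_commute p (Commute.one_right u), one_pow]
  rw [hfrob, ← pow_mul, End.finrank_ker_pow_of_pow_pred_ne_zero hu hreg, hnab]
  exact ⟨Nat.min_mul_add_eq hb j, rfl⟩
end

section
/- Let p be a prime, let H be a group, let N be a normal subgroup of H, and let v ∈ H be an element of finite order exactly p^a such that H is generated by N together with v. Assume that conjugation by v on N is an inner automorphism of N, i.e. there exists y ∈ N with v·n·v⁻¹ = y·n·y⁻¹ for all n ∈ N, and assume that N contains no element of order p^a. Then there exists z ∈ H such that z commutes with every element of N, H is generated by N together with z, and z either has infinite order or has finite order divisible by p^a. -/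
/-- Lemma `lem:innercent`.  Let `N ⊴ H` with `H` generated by `N`
and an element `v` of finite order exactly `p ^ a` which acts on `N` by an inner
automorphism.  If `N` contains no element of order `p ^ a`, then there is `z ∈ H`
centralising `N`, generating `H` together with `N`, and of infinite order or of
finite order divisible by `p ^ a`. -/
theorem stmt3 {H : Type*} [Group H] (p : ℕ) (hp : p.Prime) (a : ℕ)
    (N : Subgroup H) (hN : N.Normal) (v : H)
    (hv : orderOf v = p ^ a)
    (hgen : Subgroup.closure ((N : Set H) ∪ {v}) = ⊤)
    (hinner : ∃ y ∈ N, ∀ n ∈ N, v * n * v⁻¹ = y * n * y⁻¹)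
    (hno : ∀ x ∈ N, orderOf x ≠ p ^ a) :
    ∃ z : H, (∀ n ∈ N, z * n = n * z) ∧
      Subgroup.closure ((N : Set H) ∪ {z}) = ⊤ ∧
      (¬ IsOfFinOrder z ∨ (IsOfFinOrder z ∧ p ^ a ∣ orderOf z)) := by
  obtain ⟨y, hyN, hy⟩ := hinner
  refine ⟨y⁻¹ * v, ?_, ?_, ?_⟩
  · intro n hn
    have h1 : v * n = y * n * y⁻¹ * v := mul_inv_eq_iff_eq_mul.mp (hy n hn)
    rw [mul_assoc, h1]
    group
  · -- closure
    have hzmem : y⁻¹ * v ∈ Subgroup.closure ((N : Set H) ∪ {y⁻¹ * v}) :=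
      Subgroup.subset_closure (Or.inr rfl)
    have hvmem : v ∈ Subgroup.closure ((N : Set H) ∪ {y⁻¹ * v}) := by
      have hym : y ∈ Subgroup.closure ((N : Set H) ∪ {y⁻¹ * v}) :=
        Subgroup.subset_closure (Or.inl hyN)
      have := mul_mem hym hzmem
      simpa [mul_assoc] using this
    rw [eq_top_iff, ← hgen]
    refine (Subgroup.closure_le _).2 ?_
    rintro x (hx | hx)
    · exact Subgroup.subset_closure (Or.inl hx)
    · simp only [Set.mem_singleton_iff] at hx
      subst hx
      exact hvmem
  · by_cases hz : IsOfFinOrder (y⁻¹ * v)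
    · right
      refine ⟨hz, ?_⟩
      by_contra hnd
      set z := y⁻¹ * v with hzdef
      set m := orderOf z with hmdef
      have hm : m ≠ 0 := hz.orderOf_pos.ne'
      have h2 : v * y = y * y * y⁻¹ * v := mul_inv_eq_iff_eq_mul.mp (hy y hyN)
      have hcomzy : Commute z y := by
        show z * y = y * z
        rw [hzdef, mul_assoc, h2]
        group
      have hvz : v = y * z := by rw [hzdef]; group
      have hpa : (p : ℕ) ^ a ≠ 0 := pow_ne_zero a hp.pos.ne'
      have hvfin : IsOfFinOrder v := by
        by_contra hc
        rw [← orderOf_eq_zero_iff] at hc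
        exact hpa (hv ▸ hc.symm ▸ rfl)
      have hcomyz : Commute y z := hcomzy.symm
      have hyfin : IsOfFinOrder y := by
        have : y = v * z⁻¹ := by rw [hvz]; group
        rw [this]
        have hcvz : Commute v z := by rw [hvz]; exact hcomyz.mul_left (Commute.refl z)
        exact (hcvz.inv_right).isOfFinOrder_mul hvfin hz.inv
      set k := orderOf y with hkdef
      have hk : k ≠ 0 := hyfin.orderOf_pos.ne'
      have hdvd : p ^ a ∣ Nat.lcm k m := by
        rw [← hv, hvz]
        exact hcomyz.orderOf_mul_dvd_lcm
      have hlcm : Nat.lcm k m ≠ 0 := Nat.lcm_ne_zero hk hm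
      have hle : a ≤ (Nat.lcm k m).factorization p :=
        (Nat.Prime.pow_dvd_iff_le_factorization hp hlcm).1 hdvd
      have hfac : (Nat.lcm k m).factorization p =
          max (k.factorization p) (m.factorization p) := by
        rw [Nat.factorization_lcm hk hm]
        simp
      have hmlt : m.factorization p < a := by
        by_contra hc
        push_neg at hc
        exact hnd ((Nat.Prime.pow_dvd_iff_le_factorization hp hm).2 hc)
      have hka : a ≤ k.factorization p := by
        rw [hfac] at hle
        omega
      have hpk : p ^ a ∣ k := (Nat.Prime.pow_dvd_iff_le_factorization hp hk).2 hka
      have hord : orderOf (y ^ (k / p ^ a)) = p ^ a := by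
        have h3 := orderOf_pow_orderOf_div (x := y) (n := p ^ a) hk hpk
        exact h3
      exact hno _ (pow_mem hyN _) hord
    · exact Or.inl hz
end

section
/- Let p be a prime, a ≥ 1 a natural number, and n a natural number. If A is an element of GL_n(ℤ) (an invertible n × n integer matrix) of finite order exactly p^a, then n ≥ p^(a−1)·(p − 1); that is, n is at least the Euler totient φ(p^a). -/
open Polynomial

set_option maxHeartbeats 1000000 in
/-- Proposition `prop:Aut T`.  If `A ∈ GL_n(ℤ)` has finite order
exactly `p ^ a` with `p` prime and `a ≥ 1`, then `n ≥ p ^ (a - 1) * (p - 1)`,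
i.e. `n` is at least the Euler totient `φ(p ^ a)`. -/
theorem stmt5 (p : ℕ) (hp : p.Prime) (a : ℕ) (ha : 1 ≤ a) (n : ℕ)
    (A : Matrix.GeneralLinearGroup (Fin n) ℤ)
    (hA : orderOf A = p ^ a) :
    p ^ (a - 1) * (p - 1) ≤ n ∧ Nat.totient (p ^ a) ≤ n := by
  haveI : Fact p.Prime := ⟨hp⟩
  obtain ⟨k, rfl⟩ : ∃ k, a = k + 1 := ⟨a - 1, by omega⟩
  have hk : k + 1 - 1 = k := rfl
  have hex : ∃ B : Matrix (Fin n) (Fin n) ℚ, B ^ (p ^ (k + 1)) = 1 ∧ B ^ (p ^ k) ≠ 1 := by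
    refine ⟨((Int.castRingHom ℚ).mapMatrix : Matrix (Fin n) (Fin n) ℤ →+*
      Matrix (Fin n) (Fin n) ℚ) (A : Matrix (Fin n) (Fin n) ℤ), ?_, ?_⟩
    · have h1 : A ^ (p ^ (k + 1)) = 1 := by rw [← hA]; exact pow_orderOf_eq_one A
      have h2 : (A : Matrix (Fin n) (Fin n) ℤ) ^ (p ^ (k + 1)) = 1 := by
        have := congrArg (Units.val) h1
        simpa using this
      rw [← map_pow, h2, map_one]
    · intro h
      have hAne : A ^ (p ^ k) ≠ 1 := by
        apply pow_ne_one_of_lt_orderOf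
        · exact (pow_pos hp.pos k).ne'
        · rw [hA]; exact pow_lt_pow_right₀ hp.one_lt (Nat.lt_succ_self k)
      apply hAne
      apply Units.ext
      have hfinj : Function.Injective
          ((Int.castRingHom ℚ).mapMatrix : Matrix (Fin n) (Fin n) ℤ →+*
            Matrix (Fin n) (Fin n) ℚ) := by
        intro M N hMN
        ext i j
        have := congrArg (fun M => M i j) hMN
        simpa [Matrix.map_apply] using this
      apply hfinj
      rw [Units.val_pow_eq_pow_val, map_pow, h, Units.val_one, map_one]
  obtain ⟨B, hBpow, hBne⟩ := hex
  -- minpoly divides X ^ p^(k+1) - 1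
  have hdvd : minpoly ℚ B ∣ X ^ (p ^ (k + 1)) - 1 := by
    apply minpoly.dvd
    simp [map_pow, hBpow]
  have key : cyclotomic (p ^ (k + 1)) ℚ * (X ^ (p ^ k) - 1) = X ^ (p ^ (k + 1)) - 1 :=
    cyclotomic_prime_pow_mul_X_pow_sub_one ℚ p k
  -- cyclotomic (p^(k+1)) divides minpoly
  have hcyc : cyclotomic (p ^ (k + 1)) ℚ ∣ minpoly ℚ B := by
    by_contra h
    have hirr : Irreducible (cyclotomic (p ^ (k + 1)) ℚ) :=
      cyclotomic.irreducible_rat (pow_pos hp.pos _)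
    have hcop : IsCoprime (cyclotomic (p ^ (k + 1)) ℚ) (minpoly ℚ B) :=
      hirr.coprime_iff_not_dvd.mpr h
    have hmdvd : minpoly ℚ B ∣ X ^ (p ^ k) - 1 := by
      have h2 : minpoly ℚ B ∣ cyclotomic (p ^ (k + 1)) ℚ * (X ^ (p ^ k) - 1) := by
        rw [key]; exact hdvd
      exact (hcop.symm).dvd_of_dvd_mul_right (by rwa [mul_comm] at h2)
    obtain ⟨c, hc⟩ := hmdvd
    have hz : (aeval B) (X ^ (p ^ k) - 1 : ℚ[X]) = 0 := by
      rw [hc, map_mul, minpoly.aeval, zero_mul]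
    apply hBne
    have hz2 : B ^ (p ^ k) - 1 = 0 := by simpa [map_pow] using hz
    linear_combination (norm := abel) hz2
  -- degree comparison
  have hchar : cyclotomic (p ^ (k + 1)) ℚ ∣ (Matrix.charpoly B) :=
    hcyc.trans (Matrix.minpoly_dvd_charpoly B)
  have hne0 : (Matrix.charpoly B) ≠ 0 := (Matrix.charpoly_monic B).ne_zero
  have hdeg := Polynomial.natDegree_le_of_dvd hchar hne0
  rw [Polynomial.natDegree_cyclotomic, Matrix.charpoly_natDegree_eq_dim,
    Fintype.card_fin] at hdeg
  have htot : Nat.totient (p ^ (k + 1)) = p ^ k * (p - 1) :=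
    Nat.totient_prime_pow hp (Nat.succ_pos k)
  constructor
  · rw [hk, ← htot]; exact hdeg
  · exact hdeg
end

section
/- Let k be a field of characteristic p > 0 and let n = p^a·d with a ≥ 1 and d ≥ 1. Let V be an n-dimensional k-vector space. Then there exist a unipotent linear automorphism u of V with a single Jordan block (i.e. (u − 1)^(n−1) ≠ 0) and subspaces V₁, …, V_{p^a} of V, each of dimension d, forming an internal direct sum V = V₁ ⊕ ⋯ ⊕ V_{p^a}, such that u maps V_i onto V_{i+1} for 1 ≤ i < p^a and maps V_{p^a} onto V₁. (Consequently u normalizes the group of all automorphisms acting by a scalar on each V_i, whose weight spaces are the d-dimensional subspaces V_i.) -/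
open Module

/-! Let `N` be the nilpotent shift `b₀ ↦ b₁ ↦ ⋯ ↦ b_{n-1} ↦ 0` of a basis and `u = 1 + N`, a single
unipotent Jordan block. For `q = p ^ a` the Frobenius identity gives `u ^ q = 1 + N ^ q`, which
preserves `S = span {b_{qj} | j < d}`; hence the spaces `u ^ i S`, `i : ZMod q`, are cyclically
permuted by `u`. Each has dimension `d`, and their sum is `u`-stable, hence `N`-stable, and contains
`b₀`, so it is all of `V`; counting dimensions, the sum is direct. -/

namespace Submodule

section CyclicOrbit

variable {R M : Type*} [Semiring R] [AddCommMonoid M] [Module R M] {f : Module.End R M}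
  {S : Submodule R M} {q : ℕ}

theorem map_pow_eq_map_pow_mod (h : S.map (f ^ q) = S) (m : ℕ) :
    S.map (f ^ m) = S.map (f ^ (m % q)) := by
  have hS : ∀ j, S.map ((f ^ q) ^ j) = S := by
    intro j
    induction j with
    | zero => rw [pow_zero, Module.End.one_eq_id, map_id]
    | succ j ih => rw [pow_succ, Module.End.mul_eq_comp, map_comp, h, ih]
  conv_lhs => rw [← Nat.mod_add_div m q, pow_add, pow_mul, Module.End.mul_eq_comp, map_comp, hS]

theorem map_map_pow_zmod_val [NeZero q] (h : S.map (f ^ q) = S) (i : ZMod q) :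
    (S.map (f ^ i.val)).map f = S.map (f ^ (i + 1).val) := by
  rw [← map_comp, ← Module.End.mul_eq_comp, ← pow_succ', map_pow_eq_map_pow_mod h, ZMod.val_add,
    ZMod.val_one_eq_one_mod, Nat.add_mod_mod]

theorem map_iSup_map_pow_zmod_val_le [NeZero q] (h : S.map (f ^ q) = S) :
    (⨆ i : ZMod q, S.map (f ^ i.val)).map f ≤ ⨆ i : ZMod q, S.map (f ^ i.val) := by
  rw [map_iSup]
  exact iSup_le fun i => (map_map_pow_zmod_val h i).trans_le
    (le_iSup (fun j : ZMod q => S.map (f ^ j.val)) (i + 1))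

end CyclicOrbit

section FiniteDimensional

variable {K V : Type*} [DivisionRing K] [AddCommGroup V] [Module K V]

theorem finrank_map_of_injective {f : V →ₗ[K] V} (hf : Function.Injective f) (S : Submodule K V) :
    finrank K (S.map f) = finrank K S :=
  (equivMapOfInjective f hf S).finrank_eq.symm

theorem map_eq_of_map_le_of_injective [FiniteDimensional K V] {f : V →ₗ[K] V}
    (hf : Function.Injective f) {S : Submodule K V} (h : S.map f ≤ S) : S.map f = S :=
  eq_of_le_of_finrank_eq h (finrank_map_of_injective hf S)

end FiniteDimensional

end Submodule

theorem DirectSum.isInternal_of_iSup_eq_top_of_sum_finrank_eq {K V ι : Type*} [DivisionRing K]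
    [AddCommGroup V] [Module K V] [FiniteDimensional K V] [Fintype ι] [DecidableEq ι]
    {W : ι → Submodule K V} (hsup : ⨆ i, W i = ⊤) (hdim : ∑ i, finrank K (W i) = finrank K V) :
    DirectSum.IsInternal W := by
  have hsurj : Function.Surjective (coeLinearMap W) := by
    rw [← LinearMap.range_eq_top, range_coeLinearMap, hsup]
  refine ⟨(LinearMap.injective_iff_surjective_of_finrank_eq_finrank ?_).mpr hsurj, hsurj⟩
  rw [finrank_directSum, hdim]

theorem one_add_pow_char_pow {k A : Type*} [CommRing k] [Ring A] [Algebra k A] {p : ℕ}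
    [Fact p.Prime] [CharP k p] (x : A) (a : ℕ) : (1 + x) ^ p ^ a = 1 + x ^ p ^ a := by
  simpa using congrArg (Polynomial.aeval x) (add_pow_char_pow (1 : Polynomial k) Polynomial.X p a)

namespace Module.Basis

section Shift

variable {R M : Type*} [CommSemiring R] [AddCommMonoid M] [Module R M]

noncomputable def shift {n : ℕ} (b : Basis (Fin n) R M) : Module.End R M :=
  b.constr R fun i => if h : (i : ℕ) + 1 < n then b ⟨i + 1, h⟩ else 0

variable {n : ℕ} (b : Basis (Fin n) R M)

theorem shift_pow_apply (j : ℕ) (i : Fin n) :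
    (b.shift ^ j) (b i) = if h : (i : ℕ) + j < n then b ⟨i + j, h⟩ else 0 := by
  induction j generalizing i with
  | zero => simp
  | succ j ih =>
    rw [pow_succ, Module.End.mul_apply, shift, constr_basis, ← shift]
    split_ifs with h1 h2 h2
    · rw [ih, dif_pos (by simp; omega)]
      simp only [add_assoc, add_comm 1 j]
    · rw [ih, dif_neg (by simp; omega)]
    · omega
    · rw [map_zero]

theorem shift_pow_eq_zero : b.shift ^ n = 0 :=
  b.ext fun i => by rw [shift_pow_apply, dif_neg (by omega), LinearMap.zero_apply]

theorem isNilpotent_shift : IsNilpotent b.shift :=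
  ⟨n, b.shift_pow_eq_zero⟩

theorem shift_pow_pred_ne_zero [Nontrivial R] (hn : 0 < n) : b.shift ^ (n - 1) ≠ 0 := fun h => by
  have := b.shift_pow_apply (n - 1) ⟨0, hn⟩
  rw [h, dif_pos (by simp; omega), LinearMap.zero_apply] at this
  exact b.ne_zero _ this.symm

theorem eq_top_of_basis_zero_mem_of_shift_mem (hn : 0 < n) {N : Submodule R M}
    (h0 : b ⟨0, hn⟩ ∈ N) (hN : ∀ x ∈ N, b.shift x ∈ N) : N = ⊤ := by
  have hpow : ∀ j, (b.shift ^ j) (b ⟨0, hn⟩) ∈ N := by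
    intro j
    induction j with
    | zero => simpa using h0
    | succ j ih => rw [pow_succ', Module.End.mul_apply]; exact hN _ ih
  rw [eq_top_iff, ← b.span_eq, Submodule.span_le]
  rintro _ ⟨i, rfl⟩
  simpa [shift_pow_apply] using hpow i

end Shift

section StrideSpan

variable {R M : Type*} [CommSemiring R] [AddCommMonoid M] [Module R M] {q d : ℕ} [NeZero q] (b : Basis (Fin (q * d)) R M)

noncomputable def strideSpan : Submodule R M :=
  Submodule.span R (Set.range fun j : Fin d =>
    b ⟨q * j, Nat.mul_lt_mul_of_pos_left j.2 (NeZero.pos q)⟩)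

theorem finrank_strideSpan [Nontrivial R] [StrongRankCondition R] : finrank R b.strideSpan = d := by
  refine (finrank_span_eq_card (b.linearIndependent.comp _ fun j j' h => ?_)).trans
    (Fintype.card_fin d)
  exact Fin.ext (Nat.eq_of_mul_eq_mul_left (NeZero.pos q) (Fin.mk.inj_iff.mp h))

theorem basis_zero_mem_strideSpan (hd : 0 < d) :
    b ⟨0, Nat.mul_pos (NeZero.pos q) hd⟩ ∈ b.strideSpan :=
  Submodule.subset_span ⟨⟨0, hd⟩, by simp⟩

theorem map_shift_pow_strideSpan_le : b.strideSpan.map (b.shift ^ q) ≤ b.strideSpan := by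
  rw [strideSpan, Submodule.map_span_le]
  rintro _ ⟨j, rfl⟩
  rw [shift_pow_apply]
  split_ifs with h
  · exact Submodule.subset_span ⟨⟨j + 1, by nlinarith⟩, by simp [mul_add]⟩
  · exact zero_mem _

end StrideSpan

section Unipotent

variable {R M : Type*} [CommRing R] [AddCommGroup M] [Module R M]

theorem injective_one_add_shift_pow {n : ℕ} (b : Basis (Fin n) R M) (m : ℕ) :
    Function.Injective ⇑((1 + b.shift) ^ m) :=
  ((Module.End.isUnit_iff _).mp (b.isNilpotent_shift.isUnit_one_add.pow m)).injective

variable {q d : ℕ} [NeZero q] (b : Basis (Fin (q * d)) R M)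

theorem iSup_map_one_add_shift_pow_strideSpan_eq_top (hd : 0 < d)
    (h : b.strideSpan.map ((1 + b.shift) ^ q) = b.strideSpan) :
    ⨆ i : ZMod q, b.strideSpan.map ((1 + b.shift) ^ i.val) = ⊤ := by
  refine b.eq_top_of_basis_zero_mem_of_shift_mem (Nat.mul_pos (NeZero.pos q) hd) ?_ fun x hx => ?_
  · refine Submodule.mem_iSup_of_mem 0 ?_
    simpa using b.basis_zero_mem_strideSpan hd
  · have hux := Submodule.map_iSup_map_pow_zmod_val_le h (Submodule.mem_map_of_mem hx)
    simpa using sub_mem hux hx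

end Unipotent

section CharP

variable {k V : Type*} [Field k] [AddCommGroup V] [Module k V] [FiniteDimensional k V] {p : ℕ}
  [Fact p.Prime] [CharP k p] {a d : ℕ} (b : Basis (Fin (p ^ a * d)) k V)

theorem map_one_add_shift_pow_strideSpan :
    b.strideSpan.map ((1 + b.shift) ^ p ^ a) = b.strideSpan := by
  refine Submodule.map_eq_of_map_le_of_injective (b.injective_one_add_shift_pow _) ?_
  rw [one_add_pow_char_pow (k := k)]
  rintro _ ⟨x, hx, rfl⟩
  exact add_mem hx (b.map_shift_pow_strideSpan_le ⟨x, hx, rfl⟩)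

end CharP

end Module.Basis

theorem stmt7_general {k : Type*} [Field k] {p : ℕ} (hp : 0 < p) [CharP k p]
    (a d : ℕ) (hd : 1 ≤ d)
    {V : Type*} [AddCommGroup V] [Module k V] [FiniteDimensional k V]
    (hn : Module.finrank k V = p ^ a * d) :
    ∃ (u : V ≃ₗ[k] V) (Vi : ZMod (p ^ a) → Submodule k V),
      IsNilpotent ((u : Module.End k V) - 1) ∧
      ((u : Module.End k V) - 1) ^ (p ^ a * d - 1) ≠ 0 ∧
      (∀ i, Module.finrank k (Vi i) = d) ∧
      DirectSum.IsInternal Vi ∧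
      ∀ i, Submodule.map (u : V →ₗ[k] V) (Vi i) = Vi (i + 1) := by
  have : NeZero p := ⟨hp.ne'⟩
  have := CharP.char_is_prime_of_pos k p
  let b := Module.finBasisOfFinrankEq k V hn
  let u := LinearMap.GeneralLinearGroup.toLinearEquiv b.isNilpotent_shift.isUnit_one_add.unit
  have hu : (u : Module.End k V) = 1 + b.shift := rfl
  have hcyc := b.map_one_add_shift_pow_strideSpan
  refine ⟨u, fun i => b.strideSpan.map ((1 + b.shift) ^ i.val), ?_, ?_, ?_, ?_, ?_⟩
  · rw [hu, add_sub_cancel_left]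
    exact b.isNilpotent_shift
  · rw [hu, add_sub_cancel_left]
    exact b.shift_pow_pred_ne_zero (by positivity)
  · intro i
    rw [Submodule.finrank_map_of_injective (b.injective_one_add_shift_pow _), b.finrank_strideSpan]
  · refine DirectSum.isInternal_of_iSup_eq_top_of_sum_finrank_eq
      (b.iSup_map_one_add_shift_pow_strideSpan_eq_top hd hcyc) ?_
    simp only [Submodule.finrank_map_of_injective (b.injective_one_add_shift_pow _),
      b.finrank_strideSpan, Finset.sum_const, Finset.card_univ, ZMod.card, smul_eq_mul, hn]
  · exact fun i => Submodule.map_map_pow_zmod_val hcyc i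

/-- Proposition `prop:torus SL II`, existence part.  Let `k` be a
field of characteristic `p > 0` and `n = p ^ a * d` with `a ≥ 1`, `d ≥ 1`.  On any
`n`-dimensional `k`-vector space `V` there exist a unipotent automorphism `u` with a
single Jordan block and `d`-dimensional subspaces `V₁, …, V_{p^a}` forming an
internal direct sum decomposition of `V` which are cyclically permuted by `u`. -/
theorem stmt7 {k : Type*} [Field k] {p : ℕ} (hp : 0 < p) [CharP k p]
    (a d : ℕ) (ha : 1 ≤ a) (hd : 1 ≤ d)
    {V : Type*} [AddCommGroup V] [Module k V] [FiniteDimensional k V]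
    (hn : Module.finrank k V = p ^ a * d) :
    ∃ (u : V ≃ₗ[k] V) (Vi : ZMod (p ^ a) → Submodule k V),
      IsNilpotent ((u : Module.End k V) - 1) ∧
      ((u : Module.End k V) - 1) ^ (p ^ a * d - 1) ≠ 0 ∧
      (∀ i, Module.finrank k (Vi i) = d) ∧
      DirectSum.IsInternal Vi ∧
      ∀ i, Submodule.map (u : V →ₗ[k] V) (Vi i) = Vi (i + 1) :=
  stmt7_general hp a d hd hn
end

section
/- Let k be a field and let G₁ and G₂ be groups such that every group homomorphism from G₁ to the additive group (k, +) is trivial and every group homomorphism from G₂ to (k, +) is trivial. Let V₁ be a k-linear representation of G₁ and V₂ a k-linear representation of G₂, and regard V₁ ⊕ V₂ as a representation of G₁ × G₂ via (g₁, g₂)·(v₁, v₂) = (g₁·v₁, g₂·v₂). Then there is an isomorphism of k-vector spaces H¹(G₁ × G₂, V₁ ⊕ V₂) ≅ H¹(G₁, V₁) ⊕ H¹(G₂, V₂). -/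
/-!
Let `f` be a 1-cocycle of `G₁ × G₂` with values in `V₁ × V₂`. Since `G₁` acts trivially
on `V₂`, `g ↦ (f (g, 1)).2` is a homomorphism `G₁ → V₂`; composed with any linear functional
it is a homomorphism `G₁ → k`, hence zero, so it vanishes. Symmetrically `(f (1, g)).1 = 0`,
and the cocycle identity for `(g₁, 1) * (1, g₂)` gives
`f (g₁, g₂) = ((f (g₁, 1)).1, (f (1, g₂)).2)`. Thus restriction to the two factors identifies
the cocycles of `G₁ × G₂` with pairs of cocycles, and coboundaries with pairs of coboundaries.
-/

namespace Stmt9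

variable {k : Type*} [Field k]

def oneCocycles {G M : Type*} [Group G] [AddCommGroup M] [Module k M]
    (ρ : Representation k G M) : Submodule k (G → M) where
  carrier := {f | ∀ g h : G, f (g * h) = f g + ρ g (f h)}
  add_mem' := by
    intro f₁ f₂ h₁ h₂ g h
    simp only [Pi.add_apply, h₁ g h, h₂ g h, map_add]
    abel
  zero_mem' := by
    intro g h
    simp
  smul_mem' := by
    intro c f hf g h
    simp only [Pi.smul_apply, hf g h, smul_add, map_smul]

def oneCoboundaries {G M : Type*} [Group G] [AddCommGroup M] [Module k M]
    (ρ : Representation k G M) : Submodule k ↥(oneCocycles ρ) where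
  carrier := {f | ∃ m : M, ∀ g : G, (f : G → M) g = ρ g m - m}
  add_mem' := by
    rintro f₁ f₂ ⟨m₁, h₁⟩ ⟨m₂, h₂⟩
    refine ⟨m₁ + m₂, fun g => ?_⟩
    simp only [Submodule.coe_add, Pi.add_apply, h₁ g, h₂ g, map_add]
    abel
  zero_mem' := ⟨0, fun g => by simp⟩
  smul_mem' := by
    rintro c f ⟨m, hm⟩
    refine ⟨c • m, fun g => ?_⟩
    simp only [SetLike.val_smul, Pi.smul_apply, hm g, map_smul, smul_sub]

abbrev H1 {G M : Type*} [Group G] [AddCommGroup M] [Module k M]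
    (ρ : Representation k G M) :=
  ↥(oneCocycles ρ) ⧸ oneCoboundaries ρ

noncomputable def _root_.Submodule.prodQuotientEquiv {R M N : Type*} [Ring R] [AddCommGroup M]
    [Module R M] [AddCommGroup N] [Module R N] (p : Submodule R M) (q : Submodule R N) :
    ((M × N) ⧸ p.prod q) ≃ₗ[R] (M ⧸ p) × (N ⧸ q) :=
  (Submodule.quotEquivOfEq _ _ (by rw [LinearMap.ker_prodMap, p.ker_mkQ, q.ker_mkQ])).trans
    ((p.mkQ.prodMap q.mkQ).quotKerEquivOfSurjective
      (p.mkQ_surjective.prodMap q.mkQ_surjective))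

variable (k) in
def TrivialHomsToAdd (G : Type*) [Mul G] : Prop :=
  ∀ f : G → k, (∀ x y : G, f (x * y) = f x + f y) → ∀ x, f x = 0

theorem TrivialHomsToAdd.apply_eq_zero {G V : Type*} [Mul G] [AddCommGroup V] [Module k V]
    (h : TrivialHomsToAdd k G) {φ : G → V} (hφ : ∀ x y : G, φ (x * y) = φ x + φ y) (x : G) :
    φ x = 0 := by
  rw [← Module.forall_dual_apply_eq_zero_iff k]
  exact fun l => h (fun g => l (φ g)) (fun a b => by simp only [hφ, map_add]) x

section OuterProd

variable {G₁ G₂ V₁ V₂ : Type*} [Group G₁] [Group G₂] [AddCommGroup V₁] [Module k V₁]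
  [AddCommGroup V₂] [Module k V₂] {ρ₁ : Representation k G₁ V₁} {ρ₂ : Representation k G₂ V₂}

def outerProd (ρ₁ : Representation k G₁ V₁) (ρ₂ : Representation k G₂ V₂) :
    Representation k (G₁ × G₂) (V₁ × V₂) where
  toFun g := (ρ₁ g.1).prodMap (ρ₂ g.2)
  map_one' := by simp
  map_mul' g h := by simp [LinearMap.prodMap_mul]

@[simp]
theorem outerProd_apply (g : G₁ × G₂) (v : V₁ × V₂) :
    outerProd ρ₁ ρ₂ g v = (ρ₁ g.1 v.1, ρ₂ g.2 v.2) :=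
  rfl

variable {f : G₁ × G₂ → V₁ × V₂}

theorem fst_mk_one_mem_oneCocycles (hf : f ∈ oneCocycles (outerProd ρ₁ ρ₂)) :
    (fun g => (f (g, 1)).1) ∈ oneCocycles ρ₁ := fun x y => by
  simpa using congrArg Prod.fst (hf (x, 1) (y, 1))

theorem snd_one_mk_mem_oneCocycles (hf : f ∈ oneCocycles (outerProd ρ₁ ρ₂)) :
    (fun g => (f (1, g)).2) ∈ oneCocycles ρ₂ := fun x y => by
  simpa using congrArg Prod.snd (hf (1, x) (1, y))

theorem prodMap_mem_oneCocycles_outerProd {a : G₁ → V₁} {d : G₂ → V₂}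
    (ha : a ∈ oneCocycles ρ₁) (hd : d ∈ oneCocycles ρ₂) :
    Prod.map a d ∈ oneCocycles (outerProd ρ₁ ρ₂) := fun x y =>
  Prod.ext (ha x.1 y.1) (hd x.2 y.2)

theorem snd_apply_mk_one_eq_zero (h₁ : TrivialHomsToAdd k G₁)
    (hf : f ∈ oneCocycles (outerProd ρ₁ ρ₂)) (g : G₁) : (f (g, 1)).2 = 0 :=
  TrivialHomsToAdd.apply_eq_zero (φ := fun x => (f (x, 1)).2) h₁ (fun x y => by
    simpa using congrArg Prod.snd (hf (x, 1) (y, 1))) g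

theorem fst_apply_one_mk_eq_zero (h₂ : TrivialHomsToAdd k G₂)
    (hf : f ∈ oneCocycles (outerProd ρ₁ ρ₂)) (g : G₂) : (f (1, g)).1 = 0 :=
  TrivialHomsToAdd.apply_eq_zero (φ := fun x => (f (1, x)).1) h₂ (fun x y => by
    simpa using congrArg Prod.fst (hf (1, x) (1, y))) g

theorem apply_eq_of_mem_oneCocycles_outerProd
    (h₁ : TrivialHomsToAdd k G₁) (h₂ : TrivialHomsToAdd k G₂)
    (hf : f ∈ oneCocycles (outerProd ρ₁ ρ₂)) (g : G₁ × G₂) :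
    f g = ((f (g.1, 1)).1, (f (1, g.2)).2) := by
  have hg := hf (g.1, 1) (1, g.2)
  simp only [Prod.mk_mul_mk, mul_one, one_mul, outerProd_apply] at hg
  rw [hg]
  ext <;> simp [fst_apply_one_mk_eq_zero h₂ hf, snd_apply_mk_one_eq_zero h₁ hf]

variable (ρ₁ ρ₂) in
def oneCocyclesOuterProdEquiv
    (h₁ : TrivialHomsToAdd k G₁) (h₂ : TrivialHomsToAdd k G₂) :
    oneCocycles (outerProd ρ₁ ρ₂) ≃ₗ[k] oneCocycles ρ₁ × oneCocycles ρ₂ where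
  toFun f := (⟨_, fst_mk_one_mem_oneCocycles f.2⟩, ⟨_, snd_one_mk_mem_oneCocycles f.2⟩)
  map_add' _ _ := rfl
  map_smul' _ _ := rfl
  invFun a := ⟨_, prodMap_mem_oneCocycles_outerProd a.1.2 a.2.2⟩
  left_inv f := Subtype.ext <| funext fun g =>
    (apply_eq_of_mem_oneCocycles_outerProd h₁ h₂ f.2 g).symm
  right_inv _ := rfl

variable (ρ₁ ρ₂) in
theorem map_oneCoboundaries_oneCocyclesOuterProdEquiv
    (h₁ : TrivialHomsToAdd k G₁) (h₂ : TrivialHomsToAdd k G₂) :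
    (oneCoboundaries (outerProd ρ₁ ρ₂)).map
        (oneCocyclesOuterProdEquiv ρ₁ ρ₂ h₁ h₂).toLinearMap =
      (oneCoboundaries ρ₁).prod (oneCoboundaries ρ₂) := by
  rw [Submodule.map_equiv_eq_comap_symm]
  ext ⟨a, d⟩
  constructor
  · rintro ⟨m, hm⟩
    exact ⟨⟨m.1, fun g => congrArg Prod.fst (hm (g, 1))⟩,
      ⟨m.2, fun g => congrArg Prod.snd (hm (1, g))⟩⟩
  · rintro ⟨⟨m₁, hm₁⟩, ⟨m₂, hm₂⟩⟩
    exact ⟨(m₁, m₂), fun g => Prod.ext (hm₁ g.1) (hm₂ g.2)⟩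

end OuterProd

/-- Lemma `lem:ext`(b), `H¹` version.  Let `G₁, G₂` be groups
admitting no non-trivial homomorphism to `(k, +)`, with representations `V₁, V₂`
respectively, and let `G₁ × G₂` act on `V₁ × V₂` componentwise.  Then
`H¹(G₁ × G₂, V₁ ⊕ V₂) ≅ H¹(G₁, V₁) ⊕ H¹(G₂, V₂)` as `k`-vector spaces. -/
theorem stmt9 {G₁ G₂ : Type*} [Group G₁] [Group G₂]
    {V₁ V₂ : Type*} [AddCommGroup V₁] [Module k V₁] [AddCommGroup V₂] [Module k V₂]
    (ρ₁ : Representation k G₁ V₁) (ρ₂ : Representation k G₂ V₂)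
    (h₁ : ∀ f : G₁ → k, (∀ x y : G₁, f (x * y) = f x + f y) → ∀ x, f x = 0)
    (h₂ : ∀ f : G₂ → k, (∀ x y : G₂, f (x * y) = f x + f y) → ∀ x, f x = 0)
    (ρ : Representation k (G₁ × G₂) (V₁ × V₂))
    (hρ : ∀ g : G₁ × G₂, ∀ v : V₁ × V₂, ρ g v = (ρ₁ g.1 v.1, ρ₂ g.2 v.2)) :
    Nonempty (H1 ρ ≃ₗ[k] (H1 ρ₁ × H1 ρ₂)) := by
  obtain rfl : ρ = outerProd ρ₁ ρ₂ := MonoidHom.ext fun g => LinearMap.ext (hρ g)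
  exact ⟨(Submodule.Quotient.equiv _ _ _
    (map_oneCoboundaries_oneCocyclesOuterProdEquiv ρ₁ ρ₂ h₁ h₂)).trans
    (Submodule.prodQuotientEquiv _ _)⟩

end Stmt9
end

section
/- Let k be a field of characteristic 2, V a finite-dimensional k-vector space, and B a nondegenerate alternating bilinear form on V. Let T be a subgroup of GL(V) preserving B with a weight decomposition V = ⊕_{i∈I} V_i (weights pairwise distinct) having r := |I| ≥ 2 weight spaces, and let u ∈ GL(V) be a unipotent automorphism with a single Jordan block which preserves B and normalizes T. Then: each weight space V_i is totally isotropic (B vanishes on V_i × V_i); u permutes the weight spaces transitively, so r is a power of 2 (in particular even); and the weight spaces can be enumerated as V₁, …, V_r so that u maps V_i onto V_{i+1} (indices mod r) and B(V_i, V_j) = 0 unless j ≡ i + r/2 (mod r), giving an orthogonal decomposition V = (V₁ ⊕ V_{r/2+1}) ⊥ ⋯ ⊥ (V_{r/2} ⊕ V_r). -/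
/-!
Since `u` normalises `T`, it permutes the weight spaces. The spans of the orbits of this
permutation are `u`-stable and independent; each contains a nonzero vector of `ker (u - 1)`, which
is a line because `u` has a single Jordan block, so there is only one orbit. In characteristic `2`
a unipotent element has `2`-power order, hence so has this `r`-cycle.

As `T` preserves `B`, `B(V_i, V_j) ≠ 0` forces `χ_i χ_j = 1`. By nondegeneracy and distinctness
of the weights every weight space is paired in this way with exactly one weight space, and the
pairing commutes with the cycle, so in the cyclic numbering it is a translation by some `η` with
`2η = 0`. If `η = 0`, every weight squares to `1`, i.e. is trivial in characteristic `2`, which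
is impossible for two distinct weights; so `η = r/2`.
-/

open Module

theorem IsNilpotent.pow_finrank_eq_zero {k V : Type*} [Field k] [AddCommGroup V] [Module k V]
    [FiniteDimensional k V] {N : Module.End k V} (hN : IsNilpotent N) : N ^ finrank k V = 0 := by
  simpa [hN.charpoly_eq_X_pow_finrank] using N.aeval_self_charpoly

namespace Module.End

variable {k V : Type*} [Field k] [AddCommGroup V] [Module k V] [FiniteDimensional k V]

theorem finrank_ker_le_one_of_pow_ne_zero {N : Module.End k V} (hN : IsNilpotent N)
    (hreg : N ^ (finrank k V - 1) ≠ 0) : finrank k (LinearMap.ker N) ≤ 1 := by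
  have hR : ∀ x ∈ LinearMap.range N, N x ∈ LinearMap.range N :=
    fun x _ => LinearMap.mem_range_self N x
  -- `N` is nilpotent on its range, whose dimension is `finrank k V - finrank k (ker N)`
  have hpow : N ^ (finrank k (LinearMap.range N) + 1) = 0 := by
    ext v
    have h := LinearMap.congr_fun (isNilpotent.restrict hR hN).pow_finrank_eq_zero
      ⟨N v, LinearMap.mem_range_self N v⟩
    rw [pow_restrict] at h
    simpa [pow_succ] using congrArg Subtype.val h
  have hrank := LinearMap.finrank_range_add_finrank_ker N
  by_contra hker
  exact hreg (pow_eq_zero_of_le (by omega) hpow)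

theorem ker_ne_bot_of_isNilpotent [Nontrivial V] {N : Module.End k V} (hN : IsNilpotent N) :
    LinearMap.ker N ≠ ⊥ := fun h =>
  hN.not_isUnit ((LinearMap.isUnit_iff_ker_eq_bot N).mpr h)

theorem ker_le_of_mapsTo {N : Module.End k V} (hN : IsNilpotent N)
    (hreg : N ^ (finrank k V - 1) ≠ 0) {W : Submodule k V} (hW : W ≠ ⊥)
    (hNW : ∀ v ∈ W, N v ∈ W) : LinearMap.ker N ≤ W := by
  have : Nontrivial W := Submodule.nontrivial_iff_ne_bot.mpr hW
  obtain ⟨w, hw, hw0⟩ := Submodule.exists_mem_ne_zero_of_ne_bot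
    (ker_ne_bot_of_isNilpotent (isNilpotent.restrict hNW hN))
  have hwN : (w : V) ∈ LinearMap.ker N := by
    simpa using congrArg Subtype.val (LinearMap.mem_ker.mp hw)
  have hw0' : (w : V) ≠ 0 := by simpa using hw0
  have hspan : k ∙ (w : V) = LinearMap.ker N :=
    Submodule.eq_of_le_of_finrank_le ((Submodule.span_singleton_le_iff_mem _ _).mpr hwN)
      (by rw [finrank_span_singleton hw0']; exact finrank_ker_le_one_of_pow_ne_zero hN hreg)
  rw [← hspan, Submodule.span_singleton_le_iff_mem]
  exact w.2

theorem not_disjoint_of_mapsTo {N : Module.End k V} (hN : IsNilpotent N)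
    (hreg : N ^ (finrank k V - 1) ≠ 0) {W₁ W₂ : Submodule k V} (h₁ : W₁ ≠ ⊥) (h₂ : W₂ ≠ ⊥)
    (hN₁ : ∀ v ∈ W₁, N v ∈ W₁) (hN₂ : ∀ v ∈ W₂, N v ∈ W₂) : ¬ Disjoint W₁ W₂ := by
  intro hdisj
  obtain ⟨v, -, hv⟩ := Submodule.exists_mem_ne_zero_of_ne_bot h₁
  have : Nontrivial V := nontrivial_of_ne v 0 hv
  exact ker_ne_bot_of_isNilpotent hN (eq_bot_iff.mpr
    (hdisj.eq_bot ▸ le_inf (ker_le_of_mapsTo hN hreg h₁ hN₁) (ker_le_of_mapsTo hN hreg h₂ hN₂)))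

end Module.End

theorem exists_pow_char_pow_eq_one_of_isNilpotent_sub_one {R : Type*} [Ring R] (p : ℕ)
    [Fact p.Prime] [CharP R p] {x : R} (hx : IsNilpotent (x - 1)) : ∃ M : ℕ, x ^ p ^ M = 1 := by
  obtain ⟨m, hm⟩ := hx
  refine ⟨m, sub_eq_zero.mp ?_⟩
  rw [← one_pow (p ^ m), ← sub_pow_char_pow_of_commute p m (Commute.one_right x)]
  exact pow_eq_zero_of_le (Nat.lt_pow_self (Fact.out : p.Prime).one_lt).le hm

theorem Equiv.Perm.exists_zmodEquiv_of_forall_sameCycle {α : Type*} [Fintype α]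
    {σ : Equiv.Perm α} {a : α} (h : ∀ b, σ.SameCycle a b) :
    ∃ e : ZMod (Fintype.card α) ≃ α, ∀ m, σ (e m) = e (m + 1) := by
  have horbit : ∀ b, b ∈ MulAction.orbit (Subgroup.zpowers σ) a := fun b =>
    let ⟨z, hz⟩ := h b
    ⟨⟨σ ^ z, Subgroup.zpow_mem_zpowers σ z⟩, hz⟩
  have hcard : Function.minimalPeriod (σ • ·) a = Fintype.card α := by
    classical
    rw [MulAction.minimalPeriod_eq_card]
    exact Fintype.card_congr (Equiv.subtypeUnivEquiv horbit)
  rw [← hcard]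
  refine ⟨(MulAction.orbitZPowersEquiv σ a).symm.trans (Equiv.subtypeUnivEquiv horbit),
    fun m => ?_⟩
  obtain ⟨z, rfl⟩ := ZMod.intCast_surjective m
  rw [show (z : ZMod (Function.minimalPeriod (σ • ·) a)) + 1 = ((z + 1 : ℤ) : ZMod _) by
    push_cast; rfl]
  simp only [Equiv.trans_apply, Equiv.subtypeUnivEquiv_apply,
    MulAction.orbitZPowersEquiv_symm_apply', zpow_add_one, mul_smul]
  change σ ((σ ^ z) a) = (σ ^ z) (σ a)
  rw [← Equiv.Perm.mul_apply, ← Equiv.Perm.mul_apply, (Commute.self_zpow σ z).eq]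

theorem ZMod.eq_natCast_half_of_add_self_eq_zero {n : ℕ} [NeZero n] {η : ZMod n}
    (h : η + η = 0) (h0 : η ≠ 0) : η = ((n / 2 : ℕ) : ZMod n) := by
  have hval := ZMod.val_add η η
  rw [h, ZMod.val_zero] at hval
  have hlt := η.val_lt
  have hpos : η.val ≠ 0 := (ZMod.val_ne_zero η).mpr h0
  obtain hlt' | hge := lt_or_ge (η.val + η.val) n
  · rw [Nat.mod_eq_of_lt hlt'] at hval
    omega
  rw [Nat.mod_eq_sub_mod hge, Nat.mod_eq_of_lt (by omega)] at hval
  rw [← ZMod.natCast_zmod_val η]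
  congr 1
  omega

theorem ZMod.natCast_half_ne_zero {n : ℕ} (hn : 2 ≤ n) : ((n / 2 : ℕ) : ZMod n) ≠ 0 := by
  rw [Ne, ZMod.natCast_eq_zero_iff]
  intro h
  have := Nat.le_of_dvd (by omega) h
  omega

theorem ZMod.rel_iff_eq_add_half {n : ℕ} [NeZero n] {P : ZMod n → ZMod n → Prop}
    (hex : ∃ l, P 0 l) (hsymm : ∀ m l, P m l → P l m)
    (huniq : ∀ m l l', P m l → P m l' → l = l') (hshift : ∀ m l, P m l → P (m + 1) (l + 1))
    (hirrefl : ∃ m, ¬ P m m) (m l : ZMod n) : P m l ↔ l = m + ((n / 2 : ℕ) : ZMod n) := by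
  obtain ⟨η, hη⟩ := hex
  have hshift' : ∀ m, P m (m + η) := by
    intro m
    rw [← ZMod.natCast_zmod_val m]
    induction m.val with
    | zero => simpa using hη
    | succ j ih => simpa [add_right_comm] using hshift _ _ ih
  have hiff : ∀ m l, P m l ↔ l = m + η := fun m l =>
    ⟨fun h => huniq m l _ h (hshift' m), by rintro rfl; exact hshift' m⟩
  have hηη : η + η = 0 := ((hiff η 0).mp (hsymm _ _ (by simpa using hshift' 0))).symm
  have hη0 : η ≠ 0 := by
    rintro rfl
    obtain ⟨m, hm⟩ := hirrefl
    exact hm (by simpa using hshift' m)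
  rw [hiff, ← ZMod.eq_natCast_half_of_add_self_eq_zero hηη hη0]

namespace DirectSum.IsInternal

variable {k V I : Type*} [Field k] [AddCommGroup V] [Module k V] [DecidableEq I]
  {Vi : I → Submodule k V}

theorem exists_sum_eq [Fintype I] (h : IsInternal Vi) (v : V) :
    ∃ w : I → V, (∀ i, w i ∈ Vi i) ∧ ∑ i, w i = v := by
  have hv : v ∈ ⨆ i ∈ (Finset.univ : Finset I), Vi i := by
    simp [h.submodule_iSup_eq_top]
  obtain ⟨w, hw⟩ := (Submodule.mem_iSup_finset_iff_exists_sum Vi v).mp hv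
  exact ⟨fun i => w i, fun i => (w i).2, hw⟩

theorem eq_zero_of_sum_eq_zero [Fintype I] (h : IsInternal Vi) {w : I → V} (hw : ∀ i, w i ∈ Vi i)
    (hsum : ∑ i, w i = 0) (i : I) : w i = 0 :=
  (iSupIndep_iff_finsetSum_eq_zero_imp_eq_zero Vi).mp h.submodule_iSupIndep Finset.univ w
    (fun i _ => hw i) hsum i (Finset.mem_univ i)

theorem eq_of_le (h : IsInternal Vi) {i j : I} (hi : Vi i ≠ ⊥) (hij : Vi i ≤ Vi j) : i = j := by
  by_contra hne
  exact hi (eq_bot_iff.mpr fun v hv =>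
    (h.submodule_iSupIndep.pairwiseDisjoint hne).le_bot ⟨hv, hij hv⟩)

end DirectSum.IsInternal

section WeightDecomposition

variable {k V I : Type*} [Field k] [AddCommGroup V] [Module k V] [Fintype I] [DecidableEq I]
  {Vi : I → Submodule k V} {T : Subgroup (V ≃ₗ[k] V)} {χ : I → T → k}

theorem exists_weight_eq_of_apply_eq_smul (hdirect : DirectSum.IsInternal Vi)
    (hχ : ∀ i, ∀ t : T, ∀ v ∈ Vi i, (t : V ≃ₗ[k] V) v = χ i t • v)
    (hχinj : Function.Injective χ) {c : T → k} {v : V} (hv : v ≠ 0)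
    (hc : ∀ t : T, (t : V ≃ₗ[k] V) v = c t • v) : ∃ i, χ i = c ∧ v ∈ Vi i := by
  obtain ⟨w, hw, rfl⟩ := hdirect.exists_sum_eq v
  have hcomp : ∀ t i, (χ i t - c t) • w i = 0 := fun t =>
    hdirect.eq_zero_of_sum_eq_zero (fun i => Submodule.smul_mem _ _ (hw i)) (by
      simp only [sub_smul, Finset.sum_sub_distrib, ← Finset.smul_sum, ← hc, map_sum]
      rw [sub_eq_zero]
      exact Finset.sum_congr rfl fun i _ => (hχ i t _ (hw i)).symm)
  have hweight : ∀ i, w i ≠ 0 → χ i = c := fun i hi =>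
    funext fun t => sub_eq_zero.mp ((smul_eq_zero.mp (hcomp t i)).resolve_right hi)
  obtain ⟨i, hi⟩ : ∃ i, w i ≠ 0 := by
    by_contra! h
    exact hv (by simp [h])
  refine ⟨i, hweight i hi, ?_⟩
  rw [Finset.sum_eq_single i (fun j _ hji => by_contra fun hj =>
    hji (hχinj ((hweight j hj).trans (hweight i hi).symm))) (by simp)]
  exact hw i

theorem exists_forall_apply_mem_of_conj_mem (hdirect : DirectSum.IsInternal Vi)
    (hχ : ∀ i, ∀ t : T, ∀ v ∈ Vi i, (t : V ≃ₗ[k] V) v = χ i t • v)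
    (hχinj : Function.Injective χ) {g : V ≃ₗ[k] V} (hg : ∀ t ∈ T, g⁻¹ * t * g ∈ T) (i : I) :
    ∃ j, ∀ v ∈ Vi i, g v ∈ Vi j := by
  -- `g v` is a weight vector for the weight `t ↦ χ i (g⁻¹ t g)`
  have hgv : ∀ v ∈ Vi i, ∀ t : T, (t : V ≃ₗ[k] V) (g v) = χ i ⟨_, hg t t.2⟩ • g v := by
    intro v hv t
    simpa using congrArg g (hχ i ⟨_, hg t t.2⟩ v hv)
  by_cases hbot : ∃ v ∈ Vi i, v ≠ 0
  · obtain ⟨v₀, hv₀, hne⟩ := hbot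
    obtain ⟨j, hj, -⟩ := exists_weight_eq_of_apply_eq_smul hdirect hχ hχinj
      (g.map_ne_zero_iff.mpr hne) (hgv v₀ hv₀)
    refine ⟨j, fun v hv => ?_⟩
    rcases eq_or_ne v 0 with rfl | hv0
    · simp
    obtain ⟨j', hj', hmem⟩ := exists_weight_eq_of_apply_eq_smul hdirect hχ hχinj
      (g.map_ne_zero_iff.mpr hv0) (hgv v hv)
    rwa [hχinj (hj'.trans hj.symm)] at hmem
  · push Not at hbot
    exact ⟨i, fun v hv => by simp [hbot v hv]⟩

theorem exists_perm_map_eq_of_normalizes (hdirect : DirectSum.IsInternal Vi)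
    (hne : ∀ i, Vi i ≠ ⊥) (hχ : ∀ i, ∀ t : T, ∀ v ∈ Vi i, (t : V ≃ₗ[k] V) v = χ i t • v)
    (hχinj : Function.Injective χ) {g : V ≃ₗ[k] V} (hg : ∀ t, t ∈ T ↔ g * t * g⁻¹ ∈ T) :
    ∃ σ : Equiv.Perm I, ∀ i, (Vi i).map (g : V →ₗ[k] V) = Vi (σ i) := by
  choose σ hσ using exists_forall_apply_mem_of_conj_mem hdirect hχ hχinj
    (g := g) fun t ht => (hg _).mpr (by simpa [mul_assoc] using ht)
  choose σ' hσ' using exists_forall_apply_mem_of_conj_mem hdirect hχ hχinj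
    (g := g⁻¹) fun t ht => by simpa [mul_assoc] using (hg t).mp ht
  have hleft : Function.LeftInverse σ' σ := fun i =>
    (hdirect.eq_of_le (hne i) fun v hv => by simpa using hσ' _ _ (hσ i v hv)).symm
  refine ⟨Equiv.ofBijective σ (Finite.injective_iff_bijective.mp hleft.injective),
    fun i => le_antisymm ?_ fun v hv => ⟨g⁻¹ v, hleft i ▸ hσ' _ v hv, by simp⟩⟩
  rintro _ ⟨v, hv, rfl⟩
  exact hσ i v hv

end WeightDecomposition

theorem forall_sameCycle_of_map_eq {k V I : Type*} [Field k] [AddCommGroup V] [Module k V]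
    [FiniteDimensional k V] [Fintype I] [DecidableEq I] {Vi : I → Submodule k V}
    (hdirect : DirectSum.IsInternal Vi) (hne : ∀ i, Vi i ≠ ⊥)
    {u : V ≃ₗ[k] V} {σ : Equiv.Perm I} (hσ : ∀ i, (Vi i).map (u : V →ₗ[k] V) = Vi (σ i))
    (hu : IsNilpotent ((u : Module.End k V) - 1))
    (hreg : ((u : Module.End k V) - 1) ^ (finrank k V - 1) ≠ 0) (i j : I) :
    σ.SameCycle i j := by
  let W : Set I → Submodule k V := fun s => ⨆ j ∈ s, Vi j
  have hW_stable : ∀ s : Set I, (∀ j, j ∈ s ↔ σ j ∈ s) →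
      ∀ v ∈ W s, ((u : Module.End k V) - 1) v ∈ W s := by
    intro s hs v hv
    have hmap : (W s).map (u : V →ₗ[k] V) ≤ W s := by
      simp only [W, Submodule.map_iSup, hσ]
      exact iSup₂_le fun j hj => le_biSup Vi ((hs j).mp hj)
    simpa using sub_mem (hmap ⟨v, hv, rfl⟩) hv
  have hW_ne : ∀ s : Set I, ∀ j ∈ s, W s ≠ ⊥ := fun s j hj h =>
    hne j (eq_bot_iff.mpr (h ▸ le_biSup Vi hj))
  -- the span of the orbit of `i` and the span of its complement would both contain `ker (u - 1)`
  by_contra hij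
  exact Module.End.not_disjoint_of_mapsTo hu hreg
    (hW_ne {j | σ.SameCycle i j} i .rfl) (hW_ne {j | ¬ σ.SameCycle i j} j hij)
    (hW_stable _ fun j => Equiv.Perm.sameCycle_apply_right.symm)
    (hW_stable _ fun j => Equiv.Perm.sameCycle_apply_right.not.symm)
    (hdirect.submodule_iSupIndep.disjoint_biSup_biSup disjoint_compl_right)

theorem exists_card_eq_pow_of_isNilpotent_sub_one {k V I : Type*} [Field k] [AddCommGroup V]
    [Module k V] [Fintype I] [DecidableEq I] {Vi : I → Submodule k V} (p : ℕ) [Fact p.Prime]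
    [CharP k p] (hdirect : DirectSum.IsInternal Vi) (hne : ∀ i, Vi i ≠ ⊥) {u : V ≃ₗ[k] V}
    (hu : IsNilpotent ((u : Module.End k V) - 1)) (e : ZMod (Fintype.card I) ≃ I)
    (he : ∀ m, (Vi (e m)).map (u : V →ₗ[k] V) = Vi (e (m + 1))) :
    ∃ s : ℕ, Fintype.card I = p ^ s := by
  obtain ⟨v, -, hv⟩ := Submodule.exists_mem_ne_zero_of_ne_bot (hne (e 0))
  have : Nontrivial V := nontrivial_of_ne v 0 hv
  have : CharP (Module.End k V) p := charP_of_injective_algebraMap' k p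
  obtain ⟨M, hM⟩ := exists_pow_char_pow_eq_one_of_isNilpotent_sub_one p hu
  have hpow : ∀ n : ℕ, ∀ m, ∀ v ∈ Vi (e m), ((u : Module.End k V) ^ n) v ∈ Vi (e (m + n)) := by
    intro n
    induction n with
    | zero => simp
    | succ n ih =>
      intro m v hv
      rw [pow_succ', Module.End.mul_apply, Nat.cast_succ, ← add_assoc, ← he]
      exact Submodule.mem_map_of_mem (ih m v hv)
  have h0 : e 0 = e (p ^ M : ℕ) :=
    hdirect.eq_of_le (hne (e 0)) fun v hv => by simpa [hM] using hpow (p ^ M) 0 v hv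
  obtain ⟨s, -, hs⟩ := (Nat.dvd_prime_pow Fact.out).mp
    ((ZMod.natCast_eq_zero_iff _ _).mp (e.injective h0).symm)
  exact ⟨s, hs⟩

section Pairing

variable {k V : Type*} [Field k] [AddCommGroup V] [Module k V]

def NonOrthogonal (B : V →ₗ[k] V →ₗ[k] k) (W₁ W₂ : Submodule k V) : Prop :=
  ∃ v ∈ W₁, ∃ w ∈ W₂, B v w ≠ 0

variable {B : V →ₗ[k] V →ₗ[k] k}

theorem NonOrthogonal.symm (hB : ∀ v, B v v = 0) {W₁ W₂ : Submodule k V}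
    (h : NonOrthogonal B W₁ W₂) : NonOrthogonal B W₂ W₁ := by
  obtain ⟨v, hv, w, hw, hvw⟩ := h
  exact ⟨w, hw, v, hv, by rw [← LinearMap.IsAlt.neg hB]; exact neg_ne_zero.mpr hvw⟩

theorem NonOrthogonal.map {g : V ≃ₗ[k] V} (hg : ∀ v w, B (g v) (g w) = B v w)
    {W₁ W₂ : Submodule k V} (h : NonOrthogonal B W₁ W₂) :
    NonOrthogonal B (W₁.map (g : V →ₗ[k] V)) (W₂.map (g : V →ₗ[k] V)) := by
  obtain ⟨v, hv, w, hw, hvw⟩ := h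
  exact ⟨g v, Submodule.mem_map_of_mem hv, g w, Submodule.mem_map_of_mem hw, by rwa [hg]⟩

theorem exists_nonOrthogonal {I : Type*} [Fintype I] [DecidableEq I] {Vi : I → Submodule k V}
    (hdirect : DirectSum.IsInternal Vi)
    (hnd : ∀ v, (∀ w, B v w = 0) → v = 0) {i : I} (hi : Vi i ≠ ⊥) :
    ∃ j, NonOrthogonal B (Vi i) (Vi j) := by
  obtain ⟨v, hv, hv0⟩ := Submodule.exists_mem_ne_zero_of_ne_bot hi
  by_contra! h
  refine hv0 (hnd v fun w => ?_)
  obtain ⟨x, hx, rfl⟩ := hdirect.exists_sum_eq w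
  rw [map_sum]
  exact Finset.sum_eq_zero fun j _ => by_contra fun hj => h j ⟨v, hv, x j, hx j, hj⟩

variable {I : Type*} {Vi : I → Submodule k V} {T : Subgroup (V ≃ₗ[k] V)} {χ : I → T → k}

theorem NonOrthogonal.weight_mul_weight_eq_one (hT : ∀ t ∈ T, ∀ v w, B (t v) (t w) = B v w)
    (hχ : ∀ i, ∀ t : T, ∀ v ∈ Vi i, (t : V ≃ₗ[k] V) v = χ i t • v) {i j : I}
    (h : NonOrthogonal B (Vi i) (Vi j)) (t : T) : χ i t * χ j t = 1 := by
  obtain ⟨v, hv, w, hw, hvw⟩ := h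
  have hBt := hT t t.2 v w
  rw [hχ i t v hv, hχ j t w hw, map_smul, map_smul, LinearMap.smul_apply, smul_eq_mul,
    smul_eq_mul, ← mul_assoc] at hBt
  rw [mul_comm (χ i t)]
  exact mul_right_cancel₀ hvw (hBt.trans (one_mul _).symm)

theorem NonOrthogonal.eq (hT : ∀ t ∈ T, ∀ v w, B (t v) (t w) = B v w)
    (hχ : ∀ i, ∀ t : T, ∀ v ∈ Vi i, (t : V ≃ₗ[k] V) v = χ i t • v)
    (hχinj : Function.Injective χ) {i j j' : I} (h : NonOrthogonal B (Vi i) (Vi j))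
    (h' : NonOrthogonal B (Vi i) (Vi j')) : j = j' :=
  hχinj <| funext fun t =>
    mul_left_cancel₀ (left_ne_zero_of_mul_eq_one (h.weight_mul_weight_eq_one hT hχ t))
      ((h.weight_mul_weight_eq_one hT hχ t).trans (h'.weight_mul_weight_eq_one hT hχ t).symm)

theorem NonOrthogonal.weight_eq_one [CharP k 2] (hT : ∀ t ∈ T, ∀ v w, B (t v) (t w) = B v w)
    (hχ : ∀ i, ∀ t : T, ∀ v ∈ Vi i, (t : V ≃ₗ[k] V) v = χ i t • v) {i : I}
    (h : NonOrthogonal B (Vi i) (Vi i)) : χ i = 1 :=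
  funext fun t => (mul_self_eq_one_iff.mp (h.weight_mul_weight_eq_one hT hχ t)).elim id
    fun h => h.trans (CharTwo.neg_eq 1)

end Pairing

/-- Proposition `prop:torus CD`.  Let `k` have characteristic `2`,
`B` a nondegenerate alternating bilinear form on `V`, `T ≤ GL(V)` a subgroup
preserving `B` with a weight decomposition `V = ⊕ᵢ Vᵢ` into `r ≥ 2` weight spaces
(pairwise distinct weights), and `u` a unipotent automorphism with a single Jordan
block preserving `B` and normalising `T`.  Then each `Vᵢ` is totally isotropic, `u`
permutes the weight spaces transitively in a cycle (so `r` is a power of `2`), and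
after enumerating them cyclically `B(Vₘ, V_l) = 0` unless `l ≡ m + r/2 (mod r)`,
giving an orthogonal decomposition into the pairs `Vₘ ⊕ V_{m + r/2}`. -/
theorem stmt14 {k V : Type*} [Field k] [CharP k 2] [AddCommGroup V] [Module k V]
    [FiniteDimensional k V]
    (B : V →ₗ[k] V →ₗ[k] k)
    (halt : ∀ v : V, B v v = 0)
    (hnd : ∀ v : V, (∀ w : V, B v w = 0) → v = 0)
    (T : Subgroup (V ≃ₗ[k] V))
    (hT : ∀ t ∈ T, ∀ v w : V, B (t v) (t w) = B v w)
    {I : Type*} [Fintype I] [DecidableEq I]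
    (Vi : I → Submodule k V) (hne : ∀ i, Vi i ≠ ⊥)
    (hdirect : DirectSum.IsInternal Vi)
    (χ : I → ↥T → k)
    (hχ : ∀ i, ∀ t : ↥T, ∀ v ∈ Vi i, (t : V ≃ₗ[k] V) v = χ i t • v)
    (hdist : ∀ i j, i ≠ j → ∃ t : ↥T, χ i t ≠ χ j t)
    (r : ℕ) (hr : r = Fintype.card I) (hr2 : 2 ≤ r)
    (u : V ≃ₗ[k] V)
    (hu : IsNilpotent ((u : Module.End k V) - 1))
    (hreg : ((u : Module.End k V) - 1) ^ (Module.finrank k V - 1) ≠ 0)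
    (huB : ∀ v w : V, B (u v) (u w) = B v w)
    (hnorm : ∀ t : V ≃ₗ[k] V, t ∈ T ↔ u * t * u⁻¹ ∈ T) :
    (∀ i, ∀ v ∈ Vi i, ∀ w ∈ Vi i, B v w = 0) ∧
    (∃ s : ℕ, r = 2 ^ s) ∧
    ∃ e : ZMod r ≃ I,
      (∀ m : ZMod r, Submodule.map (u : V →ₗ[k] V) (Vi (e m)) = Vi (e (m + 1))) ∧
      ∀ m l : ZMod r, l ≠ m + ((r / 2 : ℕ) : ZMod r) →
        ∀ v ∈ Vi (e m), ∀ w ∈ Vi (e l), B v w = 0 := by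
  subst hr
  have hχinj : Function.Injective χ := fun i j hij =>
    by_contra fun hne' => (hdist i j hne').elim fun t ht => ht (congrFun hij t)
  obtain ⟨σ, hσ⟩ := exists_perm_map_eq_of_normalizes hdirect hne hχ hχinj hnorm
  obtain ⟨i₀⟩ : Nonempty I := Fintype.card_pos_iff.mp (by omega)
  obtain ⟨e, he⟩ := Equiv.Perm.exists_zmodEquiv_of_forall_sameCycle
    (forall_sameCycle_of_map_eq hdirect hne hσ hu hreg i₀)
  have hmap : ∀ m, (Vi (e m)).map (u : V →ₗ[k] V) = Vi (e (m + 1)) := fun m => by rw [hσ, he]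
  have : Fact (1 < Fintype.card I) := ⟨hr2⟩
  have hpair : ∀ m l, NonOrthogonal B (Vi (e m)) (Vi (e l)) ↔
      l = m + ((Fintype.card I / 2 : ℕ) : ZMod _) := by
    refine ZMod.rel_iff_eq_add_half ?_ (fun m l h => h.symm halt)
      (fun m l l' h h' => e.injective (h.eq hT hχ hχinj h'))
      (fun m l h => by simpa only [hmap] using h.map huB) ?_
    · obtain ⟨j, hj⟩ := exists_nonOrthogonal hdirect hnd (hne (e 0))
      exact ⟨e.symm j, by simpa using hj⟩
    · -- a weight space paired with itself has trivial weight, and at most one weight is trivial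
      by_contra! h
      exact zero_ne_one (e.injective (hχinj
        (((h 0).weight_eq_one hT hχ).trans ((h 1).weight_eq_one hT hχ).symm)))
  have hhalf := ZMod.natCast_half_ne_zero hr2
  refine ⟨fun i v hv w hw => ?_, exists_card_eq_pow_of_isNilpotent_sub_one 2 hdirect hne hu e hmap,
    e, hmap, fun m l hml v hv w hw => by_contra fun h => hml ((hpair m l).mp ⟨v, hv, w, hw, h⟩)⟩
  obtain ⟨m, rfl⟩ := e.surjective i
  by_contra h
  exact hhalf (by simpa using (hpair m m).mp ⟨v, hv, w, hw, h⟩)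
end
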